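/- arXiv:2203.09971 — 2 statements merged into one kernel-verified Lean document; each statement's English description precedes it below -/
import Mathlib

section
/- The Independent Markets mechanism is at least 0.6862-approximate for three projects: for every n ≥ 2·10^4, there exists a preference profile V of n voters over 3 projects on which the ℓ1-loss of the Independent Markets mechanism is at least 0.6862. Concretely, with ρ = 2 − √2, the profile in which ⌊nρ⌋ voters propose (1,0,0) and ⌈n(1−ρ)⌉ voters propose (√2 − 1, 1 − √2/2, 1 − √2/2) has loss (3 − 2√2)(1 − ⌈n(1−ρ)⌉/n) + ⌊nρ⌋/n ≥ 0.6862. -/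
open Finset

/-- A division among `m` projects: coordinates in `[0,1]` summing to `1`. -/
def IsDivision {m : ℕ} (x : Fin m → ℝ) : Prop :=
  (∀ j, 0 ≤ x j ∧ x j ≤ 1) ∧ ∑ j, x j = 1

/-- The ℓ1 distance between two vectors over `Fin m`. -/
noncomputable def l1 {m : ℕ} (x y : Fin m → ℝ) : ℝ := ∑ j, |x j - y j|

/-- The proportional division (coordinatewise mean) of a profile. -/
noncomputable def propDiv {n m : ℕ} (V : Fin n → Fin m → ℝ) : Fin m → ℝ :=
  fun j => (∑ i, V i j) / (n : ℝ)

/-- The `(k+1)`-th smallest element of a multiset of reals. -/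
noncomputable def medianAt (s : Multiset ℝ) (k : ℕ) : ℝ :=
  (s.sort (· ≤ ·)).getD k 0

/-- Voter reports on project `j` together with the `n+1` phantom values `p 0, …, p n`. -/
noncomputable def projValues {n m : ℕ} (V : Fin n → Fin m → ℝ)
    (p : ℕ → ℝ) (j : Fin m) : Multiset ℝ :=
  (Multiset.map (fun i => V i j) Finset.univ.val) +
    (Multiset.map p (Finset.range (n + 1)).val)

/-- The median (the `(n+1)`-th smallest of the `2n+1` values) of the `n` voter reports
on project `j` together with the `n+1` phantom values. -/
noncomputable def phantomMedian {n m : ℕ} (V : Fin n → Fin m → ℝ)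
    (p : ℕ → ℝ) (j : Fin m) : ℝ :=
  medianAt (projValues V p j) n

/-- A phantom system for `n` voters: continuous, weakly increasing functions
`y k : [0,1] → [0,1]`, `k = 0, …, n`, with `y k 0 = 0`, `y k 1 = 1`,
pointwise ordered in `k`. -/
structure PhantomSystem (n : ℕ) where
  y : ℕ → ℝ → ℝ
  contOn : ∀ k ≤ n, ContinuousOn (y k) (Set.Icc 0 1)
  monoOn : ∀ k ≤ n, MonotoneOn (y k) (Set.Icc 0 1)
  mem_Icc : ∀ k ≤ n, ∀ t ∈ Set.Icc (0:ℝ) 1, y k t ∈ Set.Icc (0:ℝ) 1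
  map_zero : ∀ k ≤ n, y k 0 = 0
  map_one : ∀ k ≤ n, y k 1 = 1
  mono_idx : ∀ t ∈ Set.Icc (0:ℝ) 1, ∀ k k', k ≤ k' → k' ≤ n → y k t ≤ y k' t

/-- `f` is the moving phantom mechanism associated with the phantom system `Y`:
on each profile of divisions, for some `t*` making the medians sum to `1`,
it outputs on each project the median of the voter reports and the phantom values. -/
def IsMovingPhantom {n m : ℕ} (f : (Fin n → Fin m → ℝ) → (Fin m → ℝ))
    (Y : PhantomSystem n) : Prop :=
  ∀ V : Fin n → Fin m → ℝ, (∀ i, IsDivision (V i)) →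
    ∃ t ∈ Set.Icc (0:ℝ) 1,
      (∑ j, phantomMedian V (fun k => Y.y k t) j) = 1 ∧
      ∀ j, f V j = phantomMedian V (fun k => Y.y k t) j

/-- Truthfulness of a budget aggregation mechanism: no voter `i` with true peak `V i`
can get an outcome closer (in ℓ1 distance) to her peak by reporting some division `v`
instead of `V i`. -/
def Truthful {n m : ℕ} (f : (Fin n → Fin m → ℝ) → (Fin m → ℝ)) : Prop :=
  ∀ V : Fin n → Fin m → ℝ, (∀ i, IsDivision (V i)) →
    ∀ i : Fin n, ∀ v : Fin m → ℝ, IsDivision v →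
      l1 (f V) (V i) ≤ l1 (f (Function.update V i v)) (V i)

/-- The ℓ1-loss of mechanism `f` on profile `V`. -/
noncomputable def loss {n m : ℕ} (f : (Fin n → Fin m → ℝ) → (Fin m → ℝ))
    (V : Fin n → Fin m → ℝ) : ℝ :=
  l1 (f V) (propDiv V)

/-- The phantom system of the Piecewise Uniform mechanism for `n` voters. -/
noncomputable def puPhantom (n : ℕ) (k : ℕ) (t : ℝ) : ℝ :=
  if t < 1 / 2 then
    (if (k : ℝ) / (n : ℝ) < 1 / 2 then 0 else 4 * t * (k : ℝ) / (n : ℝ) - 2 * t)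
  else
    (if (k : ℝ) / (n : ℝ) < 1 / 2 then (k : ℝ) * (2 * t - 1) / (n : ℝ)
     else (k : ℝ) * (3 - 2 * t) / (n : ℝ) - 2 + 2 * t)

/-- `w` is an output of the Piecewise Uniform mechanism on profile `V`. -/
def IsPUOutcome {n m : ℕ} (V : Fin n → Fin m → ℝ) (w : Fin m → ℝ) : Prop :=
  ∃ t ∈ Set.Icc (0:ℝ) 1,
    (∑ j, phantomMedian V (fun k => puPhantom n k t) j) = 1 ∧
    ∀ j, w j = phantomMedian V (fun k => puPhantom n k t) j

/-- `w` is an output of the Independent Markets mechanism (phantoms `min (k·t) 1`)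
on profile `V`. -/
def IsIMOutcome {n m : ℕ} (V : Fin n → Fin m → ℝ) (w : Fin m → ℝ) : Prop :=
  ∃ t : ℝ, 0 ≤ t ∧
    (∑ j, phantomMedian V (fun k => min ((k : ℝ) * t) 1) j) = 1 ∧
    ∀ j, w j = phantomMedian V (fun k => min ((k : ℝ) * t) 1) j

/-- A single-minded division: it assigns the whole budget to one project. -/
def SingleMindedDiv {m : ℕ} (v : Fin m → ℝ) : Prop := ∃ j, v j = 1

/-- A double-minded division relative to an outcome `w` (three projects): it agrees with
`w` on one project `j`, proposes `1 - w j` on another project, and `0` on the third. -/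
def DoubleMindedDiv (w v : Fin 3 → ℝ) : Prop :=
  ∃ j j' : Fin 3, j ≠ j' ∧ v j = w j ∧ v j' = 1 - w j ∧
    ∀ k, k ≠ j → k ≠ j' → v k = 0

/-- A three-type profile for mechanism `f`: each voter is fully-satisfied,
double-minded, or single-minded. -/
def ThreeTypeProfile {n : ℕ} (f : (Fin n → Fin 3 → ℝ) → (Fin 3 → ℝ))
    (V : Fin n → Fin 3 → ℝ) : Prop :=
  ∀ i, V i = f V ∨ DoubleMindedDiv (f V) (V i) ∨ SingleMindedDiv (V i)

/-- The single-minded division fully supporting project `j`. -/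
noncomputable def singleDiv (j : Fin 3) : Fin 3 → ℝ :=
  fun j' => if j' = j then 1 else 0

/-- The double-minded division proposing `x k` on project `k`, `1 - x k` on
project `j` and `0` on the remaining project. -/
noncomputable def doubleDiv (x : Fin 3 → ℝ) (k j : Fin 3) : Fin 3 → ℝ :=
  fun j' => if j' = k then x k else if j' = j then 1 - x k else 0

/-- A utilitarian mechanism: it always returns a division minimizing the total
ℓ1 distance (social cost) to the voters' proposals. -/
def Utilitarian {n m : ℕ} (f : (Fin n → Fin m → ℝ) → (Fin m → ℝ)) : Prop :=
  ∀ V : Fin n → Fin m → ℝ, (∀ i, IsDivision (V i)) →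
    IsDivision (f V) ∧
    ∀ x : Fin m → ℝ, IsDivision x → (∑ i, l1 (V i) (f V)) ≤ ∑ i, l1 (V i) x


/-- The lower-bound profile for the Independent Markets mechanism: with
`ρ = 2 - √2`, `⌊nρ⌋` voters propose `(1,0,0)` and the remaining
`⌈n(1-ρ)⌉` voters propose `(√2 - 1, 1 - √2/2, 1 - √2/2)`. -/
noncomputable def imProfile (n : ℕ) : Fin n → Fin 3 → ℝ :=
  fun i j =>
    if (i : ℕ) < Nat.floor ((n : ℝ) * (2 - Real.sqrt 2)) then
      (if (j : ℕ) = 0 then 1 else 0)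
    else
      (if (j : ℕ) = 0 then Real.sqrt 2 - 1 else 1 - Real.sqrt 2 / 2)

/-
On `imProfile n` the first `a = ⌊n(2 - √2)⌋` voters propose `(1, 0, 0)` and the other `b = n - a`
propose `(1 - 2c, c, c)` with `c = 1 - √2/2`. On projects 1 and 2 the reports are `a` zeros and
`b` copies of `c`, so the median with the phantoms `min (k t) 1` is `min (b t) c`; on project 0
it is at most `max (a t) (1 - 2c)`. If `b t < c`, the budget constraint forces `(a + 2b) t ≥ 1`,
hence `b < c (a + 2b)`; but `ρ = 2 - √2` is precisely the share for which `c (a + 2b) ≤ b`.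
So the outcome is `(1 - 2c, c, c)`, at ℓ1 distance `4 c a / n ≈ 2 (2 - √2)² = 12 - 8√2` from the
proportional division.
-/

namespace List

variable {α : Type*} [LinearOrder α] {L : List α} {k : ℕ} {v : α}

theorem SortedLE.getElem_le_of_lt_countP (hL : L.SortedLE) (hk : k < L.length)
    (h : k < L.countP (· ≤ v)) : L[k] ≤ v := by
  by_contra! hlt
  have hdrop : (L.drop k).countP (· ≤ v) = 0 := countP_eq_zero.2 fun x hx => by
    obtain ⟨j, hj, rfl⟩ := mem_drop_iff_getElem.1 hx
    simpa using hlt.trans_le (sortedLE_iff_getElem_le_getElem_of_le.1 hL (Nat.le_add_right k j))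
  have : L.countP (· ≤ v) ≤ k := calc
    L.countP (· ≤ v) = (L.take k).countP (· ≤ v) + (L.drop k).countP (· ≤ v) := by
      rw [← countP_append, take_append_drop]
    _ ≤ (L.take k).length := by rw [hdrop, add_zero]; exact countP_le_length
    _ ≤ k := length_take_le k L
  omega

theorem SortedLE.le_getElem_of_countP_le (hL : L.SortedLE) (hk : k < L.length)
    (h : L.countP (· < v) ≤ k) : v ≤ L[k] := by
  by_contra! hlt
  have htake : (L.take (k + 1)).countP (· < v) = k + 1 := by
    rw [countP_eq_length.2, length_take_of_le hk]
    intro x hx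
    obtain ⟨j, hj, rfl⟩ := mem_take_iff_getElem.1 hx
    simpa using (sortedLE_iff_getElem_le_getElem_of_le.1 hL (by omega : j ≤ k)).trans_lt hlt
  have := (take_sublist (k + 1) L).countP_le (p := (· < v))
  omega

end List

theorem medianAt_le_of_lt_countP {s : Multiset ℝ} {k : ℕ} {v : ℝ}
    (h : k < s.countP (· ≤ v)) : medianAt s k ≤ v := by
  rw [← s.sort_eq (· ≤ ·), Multiset.coe_countP] at h
  have hk : k < (s.sort (· ≤ ·)).length := h.trans_le List.countP_le_length
  rw [medianAt, List.getD_eq_getElem _ _ hk]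
  exact (s.pairwise_sort _).sortedLE.getElem_le_of_lt_countP hk h

theorem le_medianAt_of_countP_le {s : Multiset ℝ} {k : ℕ} {v : ℝ} (hk : k < Multiset.card s)
    (h : s.countP (· < v) ≤ k) : v ≤ medianAt s k := by
  rw [← s.sort_eq (· ≤ ·), Multiset.coe_countP] at h
  rw [← s.length_sort (· ≤ ·)] at hk
  rw [medianAt, List.getD_eq_getElem _ _ hk]
  exact (s.pairwise_sort _).sortedLE.le_getElem_of_countP_le hk h

theorem Multiset.countP_replicate {α : Type*} (p : α → Prop) [DecidablePred p] (n : ℕ) (a : α) :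
    (Multiset.replicate n a).countP p = if p a then n else 0 := by
  rw [← Multiset.coe_replicate, Multiset.coe_countP, List.countP_replicate]
  simp

noncomputable def imPhantoms (n : ℕ) (t : ℝ) : Multiset ℝ :=
  (range (n + 1)).val.map fun k : ℕ => min ((k : ℝ) * t) 1

section imPhantoms

variable {n m : ℕ} {t x : ℝ}

theorem card_imPhantoms : Multiset.card (imPhantoms n t) = n + 1 := by
  simp [imPhantoms]

theorem lt_countP_imPhantoms (hm : m ≤ n) (ht : 0 ≤ t) (hx : m * t ≤ x) :
    m < (imPhantoms n t).countP (· ≤ x) := by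
  have hle : imPhantoms m t ≤ imPhantoms n t :=
    Multiset.map_le_map (Finset.val_le_iff.2 (range_subset_range.2 (by omega)))
  have hall : (imPhantoms m t).countP (· ≤ x) = m + 1 := by
    rw [Multiset.countP_eq_card.2, card_imPhantoms]
    simp only [imPhantoms, Multiset.mem_map, mem_val, mem_range]
    rintro _ ⟨k, hk, rfl⟩
    have hkm : (k : ℝ) ≤ m := by exact_mod_cast Nat.lt_succ_iff.1 hk
    exact (min_le_left _ _).trans ((mul_le_mul_of_nonneg_right hkm ht).trans hx)
  have := Multiset.countP_le_of_le (· ≤ x) hle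
  omega

theorem countP_imPhantoms_le (ht : 0 ≤ t) (hx : x ≤ m * t) (hx1 : x ≤ 1) :
    (imPhantoms n t).countP (· < x) ≤ m := by
  rw [imPhantoms, Multiset.countP_map, ← Finset.filter_val, card_val]
  refine (card_le_card fun k hk => ?_).trans (card_range m).le
  rw [mem_filter] at hk
  have hkt : (k : ℝ) * t < m * t := by
    rcases min_lt_iff.1 hk.2 with h | h
    · exact h.trans_le hx
    · exact absurd (h.trans_le hx1) (lt_irrefl 1)
  exact mem_range.2 (by exact_mod_cast lt_of_mul_lt_mul_right hkt ht)

end imPhantoms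

section replicate

variable {n a b : ℕ} {t : ℝ}

theorem medianAt_replicate_add_replicate_add_imPhantoms_le (hab : a + b = n) (x z : ℝ)
    (ht : 0 ≤ t) :
    medianAt (.replicate a x + .replicate b z + imPhantoms n t) n ≤ max (a * t) z := by
  apply medianAt_le_of_lt_countP
  have hz : (Multiset.replicate b z).countP (· ≤ max (a * t) z) = b := by
    simp [Multiset.countP_replicate]
  have := lt_countP_imPhantoms (n := n) (by omega) ht (le_max_left (a * t) z)
  rw [Multiset.countP_add, Multiset.countP_add, hz]
  omega

theorem medianAt_replicate_add_replicate_add_imPhantoms_eq_min {x c : ℝ} (hab : a + b = n)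
    (ht : 0 ≤ t) (hc0 : 0 ≤ c) (hc1 : c ≤ 1) (hx : x ≤ min (b * t) c) :
    medianAt (.replicate a x + .replicate b c + imPhantoms n t) n = min (b * t) c := by
  apply le_antisymm
  · apply medianAt_le_of_lt_countP
    have hx' : (Multiset.replicate a x).countP (· ≤ min (b * t) c) = a := by
      rw [Multiset.countP_replicate, if_pos hx]
    rw [Multiset.countP_add, Multiset.countP_add, hx']
    rcases le_total (b * t) c with hbt | hcb
    · have := lt_countP_imPhantoms (n := n) (by omega) ht (le_min le_rfl hbt)
      omega
    · have hc : (Multiset.replicate b c).countP (· ≤ min (b * t) c) = b := by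
        rw [Multiset.countP_replicate, if_pos (le_min hcb le_rfl)]
      have hphantom : ((0 : ℕ) : ℝ) * t ≤ min (b * t) c := by
        rw [Nat.cast_zero, zero_mul]
        exact le_min (by positivity) hc0
      have := lt_countP_imPhantoms (n := n) (Nat.zero_le n) ht hphantom
      omega
  · apply le_medianAt_of_countP_le
    · simp only [Multiset.card_add, Multiset.card_replicate, card_imPhantoms]
      omega
    have hx' : (Multiset.replicate a x).countP (· < min (b * t) c) ≤ a :=
      (Multiset.countP_le_card _ _).trans_eq (Multiset.card_replicate a x)
    have hc : (Multiset.replicate b c).countP (· < min (b * t) c) = 0 := by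
      simp [Multiset.countP_replicate]
    have := countP_imPhantoms_le (n := n) ht (min_le_left (b * t) c) ((min_le_right _ _).trans hc1)
    rw [Multiset.countP_add, Multiset.countP_add, hc]
    omega

end replicate

def twoTypeProfile {n m : ℕ} (a : ℕ) (x y : Fin m → ℝ) : Fin n → Fin m → ℝ :=
  fun i => if (i : ℕ) < a then x else y

section twoTypeProfile

variable {n m a b : ℕ} (x y : Fin m → ℝ)

theorem map_univ_twoTypeProfile (hab : a + b = n) (j : Fin m) :
    (univ : Finset (Fin n)).val.map (fun i => twoTypeProfile a x y i j)
      = .replicate a (x j) + .replicate b (y j) := by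
  subst hab
  rw [Fin.univ_val_map, List.ofFn_add]
  simp [twoTypeProfile, List.ofFn_const, ← Multiset.coe_add, Multiset.coe_replicate]

theorem phantomMedian_twoTypeProfile_imPhantoms (hab : a + b = n) (t : ℝ) (j : Fin m) :
    phantomMedian (twoTypeProfile a x y : Fin n → Fin m → ℝ) (fun k => min ((k : ℝ) * t) 1) j
      = medianAt (.replicate a (x j) + .replicate b (y j) + imPhantoms n t) n := by
  rw [phantomMedian, projValues, map_univ_twoTypeProfile x y hab]
  rfl

theorem propDiv_twoTypeProfile (hab : a + b = n) (j : Fin m) :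
    propDiv (twoTypeProfile a x y : Fin n → Fin m → ℝ) j = (a * x j + b * y j) / n := by
  rw [propDiv, Finset.sum_eq_multiset_sum, map_univ_twoTypeProfile x y hab]
  simp

end twoTypeProfile

section threeProjects

variable {n a b : ℕ} {c : ℝ}

theorem IsIMOutcome.eq_of_twoTypeProfile (hab : a + b = n) (hc0 : 0 ≤ c) (hc1 : c ≤ 1)
    (hcb : c * (a + 2 * b) ≤ b) {w : Fin 3 → ℝ}
    (hw : IsIMOutcome (twoTypeProfile a (singleDiv 0) ![1 - 2 * c, c, c] : Fin n → Fin 3 → ℝ) w) :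
    w = ![1 - 2 * c, c, c] := by
  obtain ⟨t, ht, hsum, hwt⟩ := hw
  simp only [phantomMedian_twoTypeProfile_imPhantoms _ _ hab] at hsum hwt
  have hmed : ∀ j : Fin 3, j ≠ 0 → w j = min (b * t) c := by
    intro j hj
    have hsingle : singleDiv 0 j = 0 := if_neg hj
    have hc : ![1 - 2 * c, c, c] j = c := by fin_cases j <;> simp_all
    rw [hwt, hsingle, hc]
    exact medianAt_replicate_add_replicate_add_imPhantoms_eq_min hab ht hc0 hc1
      (le_min (by positivity) hc0)
  have hw0 : w 0 ≤ max (a * t) (1 - 2 * c) := by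
    rw [hwt]
    exact medianAt_replicate_add_replicate_add_imPhantoms_le hab _ _ ht
  rw [Fin.sum_univ_three, ← hwt, ← hwt, ← hwt, hmed 1 (by decide), hmed 2 (by decide)] at hsum
  have hsat : c ≤ b * t := by
    by_contra! hlt
    rw [min_eq_left hlt.le] at hsum
    have hat : 1 ≤ (a + 2 * b) * t := by
      have : w 0 ≤ a * t := (le_max_iff.1 hw0).resolve_right (by linarith)
      linarith
    nlinarith
  rw [min_eq_right hsat] at hmed hsum
  funext j
  fin_cases j
  · simp only [Fin.zero_eta, Fin.isValue, Matrix.cons_val_zero]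
    linarith
  · exact hmed 1 (by decide)
  · exact hmed 2 (by decide)

theorem l1_propDiv_twoTypeProfile (hn : 0 < n) (hab : a + b = n) (hc : 0 ≤ c) :
    l1 ![1 - 2 * c, c, c]
      (propDiv (twoTypeProfile a (singleDiv 0) ![1 - 2 * c, c, c] : Fin n → Fin 3 → ℝ))
      = 4 * c * a / n := by
  have hN : (n : ℝ) = a + b := by exact_mod_cast hab.symm
  have hN0 : (0 : ℝ) < n := by exact_mod_cast hn
  have e0 : 1 - 2 * c - (a + b * (1 - 2 * c)) / n = -(2 * c * a / n) := by
    field_simp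
    rw [hN]
    ring
  have e1 : c - b * c / n = c * a / n := by
    field_simp
    rw [hN]
    ring
  simp only [l1, Fin.sum_univ_three, propDiv_twoTypeProfile _ _ hab, singleDiv, Fin.isValue,
    Matrix.cons_val_zero, Matrix.cons_val_one, Matrix.cons_val, ↓reduceIte, one_ne_zero,
    Fin.reduceEq, mul_one, mul_zero, zero_add]
  rw [e0, e1, abs_neg, abs_of_nonneg (by positivity), abs_of_nonneg (by positivity)]
  ring

end threeProjects

theorem Nat.ceil_natCast_sub_add_floor {n : ℕ} {y : ℝ} (hy : 0 ≤ y) (hyn : y ≤ n) :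
    ⌈(n : ℝ) - y⌉₊ + ⌊y⌋₊ = n := by
  have h1 := Nat.floor_le hy
  have h2 := Nat.lt_floor_add_one y
  have h3 := Nat.le_ceil ((n : ℝ) - y)
  have h4 := Nat.ceil_lt_add_one (sub_nonneg.2 hyn)
  have hlo : n < ⌈(n : ℝ) - y⌉₊ + ⌊y⌋₊ + 1 := by
    exact_mod_cast (by linarith : (n : ℝ) < ⌈(n : ℝ) - y⌉₊ + ⌊y⌋₊ + 1)
  have hhi : ⌈(n : ℝ) - y⌉₊ + ⌊y⌋₊ < n + 1 := by
    exact_mod_cast (by linarith : (⌈(n : ℝ) - y⌉₊ + ⌊y⌋₊ : ℝ) < n + 1)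
  omega

section sqrtTwo

open Real

theorem imProfile_eq_twoTypeProfile (n : ℕ) :
    imProfile n = twoTypeProfile ⌊(n : ℝ) * (2 - √2)⌋₊ (singleDiv 0)
      ![1 - 2 * (1 - √2 / 2), 1 - √2 / 2, 1 - √2 / 2] := by
  have h0 : (1 : ℝ) - 2 * (1 - √2 / 2) = √2 - 1 := by ring
  funext i j
  by_cases hi : (i : ℕ) < ⌊(n : ℝ) * (2 - √2)⌋₊ <;> fin_cases j <;>
    simp [imProfile, twoTypeProfile, singleDiv, hi, h0]

theorem one_sub_sqrt_two_div_two_mul_le {a b : ℝ} (h : a ≤ (a + b) * (2 - √2)) :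
    (1 - √2 / 2) * (a + 2 * b) ≤ b := by
  linear_combination (√2 / 2) * h - (a + b) / 2 * sq_sqrt (zero_le_two : (0 : ℝ) ≤ 2)

theorem le_four_mul_one_sub_sqrt_two_div_two_mul_floor {n : ℕ} (hn : 20000 ≤ n) :
    (0.6862 : ℝ) ≤ 4 * (1 - √2 / 2) * ⌊(n : ℝ) * (2 - √2)⌋₊ / n := by
  have hS2 := sq_sqrt (zero_le_two : (0 : ℝ) ≤ 2)
  have hS : √2 ≤ 1.4142136 := by nlinarith [sqrt_nonneg 2]
  have hN : (20000 : ℝ) ≤ n := by exact_mod_cast hn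
  have hfloor := Nat.lt_floor_add_one ((n : ℝ) * (2 - √2))
  rw [le_div_iff₀ (by positivity)]
  nlinarith

end sqrtTwo

/-- The Independent Markets mechanism is at least `0.6862`-approximate
for three projects: for `n ≥ 2·10⁴`, on the concrete profile `imProfile n`, its loss
equals `(3 - 2√2)(1 - ⌈n(1-ρ)⌉/n) + ⌊nρ⌋/n` and is at least `0.6862`. -/
theorem independent_markets_lower_bound (n : ℕ) (hn : 2 * 10 ^ 4 ≤ n)
    (w : Fin 3 → ℝ) (hw : IsIMOutcome (imProfile n) w) :
    l1 w (propDiv (imProfile n)) =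
      (3 - 2 * Real.sqrt 2) *
        (1 - (Nat.ceil ((n : ℝ) * (Real.sqrt 2 - 1)) : ℝ) / (n : ℝ))
      + (Nat.floor ((n : ℝ) * (2 - Real.sqrt 2)) : ℝ) / (n : ℝ) ∧
    0.6862 ≤ l1 w (propDiv (imProfile n)) := by
  have hS1 := Real.one_lt_sqrt_two
  have hS2 := Real.sqrt_two_lt_three_halves
  have hN : (0 : ℝ) < n := by positivity
  set a := ⌊(n : ℝ) * (2 - √2)⌋₊
  have hab : a + ⌈(n : ℝ) * (√2 - 1)⌉₊ = n := by
    rw [add_comm, show (n : ℝ) * (√2 - 1) = n - n * (2 - √2) by ring]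
    exact Nat.ceil_natCast_sub_add_floor (by nlinarith) (by nlinarith)
  set b := ⌈(n : ℝ) * (√2 - 1)⌉₊
  have hnab : (n : ℝ) = a + b := by exact_mod_cast hab.symm
  have hbudget : (1 - √2 / 2) * (a + 2 * b) ≤ b :=
    one_sub_sqrt_two_div_two_mul_le (hnab ▸ Nat.floor_le (by nlinarith))
  rw [imProfile_eq_twoTypeProfile] at hw ⊢
  rw [hw.eq_of_twoTypeProfile hab (by linarith) (by linarith) hbudget,
    l1_propDiv_twoTypeProfile (by omega) hab (by linarith)]
  refine ⟨?_, le_four_mul_one_sub_sqrt_two_div_two_mul_floor hn⟩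
  field_simp
  rw [hnab]
  ring
end

section
/- For every m ≥ 8 there is a preference profile on which the Piecewise Uniform mechanism has ℓ1-loss at least 2 − 8/m^{1/3}. Concretely, set z = ⌊m − m^{2/3}⌋ and a = (m − z)^2, and consider the profile with m voters over m projects where, for i = 1,…,z, voter i proposes the single-minded division with 1 on project i, and each of the remaining m − z voters proposes the division x with x_j = 1/(a+z) for j ≤ z and x_j = (m−z)/(a+z) for j > z; the Piecewise Uniform mechanism outputs x on this profile, and the resulting loss equals 2·(a/(a+z))·(z/m) ≥ 2 − 8/m^{1/3}. -/
open Finset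

/-- `z = ⌊m - m^(2/3)⌋`. -/
noncomputable def zLB (m : ℕ) : ℕ := Nat.floor ((m : ℝ) - (m : ℝ) ^ ((2 : ℝ) / 3))

/-- `a = (m - z)²`. -/
noncomputable def aLB (m : ℕ) : ℕ := (m - zLB m) ^ 2

/-- The target division: `1/(a+z)` on the first `z` projects and `(m-z)/(a+z)` on the
remaining `m - z` projects. -/
noncomputable def xLB (m : ℕ) : Fin m → ℝ :=
  fun j => if (j : ℕ) < zLB m then 1 / ((aLB m : ℝ) + (zLB m : ℝ))
    else ((m : ℝ) - (zLB m : ℝ)) / ((aLB m : ℝ) + (zLB m : ℝ))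

/-- The lower-bound profile with `m` voters over `m` projects: voter `i < z` is
single-minded toward project `i`; the remaining `m - z` voters propose `xLB m`. -/
noncomputable def lbProfile (m : ℕ) : Fin m → Fin m → ℝ :=
  fun i j => if (i : ℕ) < zLB m then (if j = i then 1 else 0) else xLB m j

/-! At `t* = 1/2 + m/(2(a+z))` the phantoms are `y_k(t*) = k/(a+z)` for `2k < m`, and
`y_k(t*) ≥ k/(a+z)` for every `k`. So on each project `j` at most `z` reports and at most `m - z`
phantoms lie strictly below `x_j`, while every report except voter `j`'s, together with
`y_0 = 0` and `y_1 = 1/(a+z)`, lies weakly below it: the `(m+1)`-th smallest value is `x_j`.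
Since the phantoms increase with `t` and the medians must sum to one, the outcome of the
mechanism is unique. With `r = m^(1/3)` we have `r² ≤ m - z < r² + 1`, which turns the loss
bound into a polynomial inequality in `r`. -/

theorem List.SortedLE.lt_countP_iff {α : Type*} [Preorder α] {l : List α} (hl : l.SortedLE)
    {P : α → Prop} [DecidablePred P] (hP : Antitone P) {n : ℕ} (hn : n < l.length) :
    n < l.countP P ↔ P l[n] := by
  constructor
  · contrapose!
    intro hPn
    have hdrop : (l.drop n).countP P = 0 := by
      refine List.countP_eq_zero.2 fun a ha hPa => hPn ?_
      obtain ⟨i, hi, rfl⟩ := List.mem_iff_getElem.1 ha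
      rw [decide_eq_true_eq, List.getElem_drop] at hPa
      exact hP (hl.getElem_le_getElem_of_le (Nat.le_add_right n i)) hPa
    have htake : (l.take n).countP P ≤ n :=
      List.countP_le_length.trans (List.length_take_le n l)
    rw [← List.take_append_drop n l, List.countP_append, hdrop]
    omega
  · intro hPn
    have htake : (l.take (n + 1)).countP P = n + 1 := by
      rw [List.countP_eq_length.2, List.length_take_of_le hn]
      intro a ha
      obtain ⟨i, hi, rfl⟩ := List.mem_iff_getElem.1 ha
      rw [List.length_take_of_le hn] at hi
      rw [decide_eq_true_eq, List.getElem_take]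
      exact hP (hl.getElem_le_getElem_of_le (Nat.le_of_lt_succ hi)) hPn
    calc n < (l.take (n + 1)).countP P := by omega
      _ ≤ l.countP P := (List.take_sublist _ _).countP_le

theorem lt_countP_iff_medianAt {s : Multiset ℝ} {n : ℕ} (hn : n < Multiset.card s)
    {P : ℝ → Prop} [DecidablePred P] (hP : Antitone P) :
    n < s.countP P ↔ P (medianAt s n) := by
  have hlen : n < (s.sort (· ≤ ·)).length := by rwa [Multiset.length_sort]
  have h := (List.sortedLE_iff_pairwise.2 (Multiset.pairwise_sort s _)).lt_countP_iff hP hlen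
  rwa [← Multiset.coe_countP, Multiset.sort_eq, ← List.getD_eq_getElem _ 0 hlen] at h

theorem medianAt_eq_of_countP {s : Multiset ℝ} {n : ℕ} (hn : n < Multiset.card s) {v : ℝ}
    (hlt : s.countP (· < v) ≤ n) (hle : n < s.countP (· ≤ v)) : medianAt s n = v :=
  le_antisymm ((lt_countP_iff_medianAt hn antitone_le).1 hle) <|
    not_lt.1 fun h => by have := (lt_countP_iff_medianAt hn antitone_lt).2 h; omega

section Phantom

variable {n m : ℕ} (V : Fin n → Fin m → ℝ)

theorem card_projValues (p : ℕ → ℝ) (j : Fin m) :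
    Multiset.card (projValues V p j) = 2 * n + 1 := by
  simp only [projValues, Multiset.card_add, Multiset.card_map, Finset.card_val, card_univ,
    Fintype.card_fin, card_range]
  ring

theorem countP_projValues (p : ℕ → ℝ) (j : Fin m) (P : ℝ → Prop) [DecidablePred P] :
    (projValues V p j).countP P = #{i | P (V i j)} + #{k ∈ range (n + 1) | P (p k)} := by
  rw [projValues, Multiset.countP_add, Multiset.countP_map, Multiset.countP_map]
  rfl

theorem phantomMedian_mono {p q : ℕ → ℝ} (hpq : ∀ k ≤ n, p k ≤ q k) (j : Fin m) :
    phantomMedian V p j ≤ phantomMedian V q j := by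
  have hn : ∀ p, n < Multiset.card (projValues V p j) := fun p => by
    rw [card_projValues]; omega
  have hq := (lt_countP_iff_medianAt (hn q) (antitone_le (x := phantomMedian V q j))).2 le_rfl
  refine (lt_countP_iff_medianAt (hn p) antitone_le).1 (hq.trans_le ?_)
  rw [countP_projValues, countP_projValues]
  gcongr with k hk
  exact hpq k (Nat.lt_succ_iff.1 (mem_range.1 hk))

end Phantom

theorem puPhantom_monotone {n k : ℕ} (hk : k ≤ n) : Monotone (puPhantom n k) := by
  set u : ℝ := k / n
  have hu0 : 0 ≤ u := by positivity
  have hu1 : u ≤ 1 := div_le_one_of_le₀ (by exact_mod_cast hk) n.cast_nonneg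
  have hpu : ∀ t, puPhantom n k t = if t < 1 / 2 then (if u < 1 / 2 then 0 else (4 * u - 2) * t)
      else (if u < 1 / 2 then u * (2 * t - 1) else 3 * u - 2 + (2 - 2 * u) * t) := by
    intro t
    simp only [puPhantom, u]
    split_ifs <;> ring
  intro t₁ t₂ h12
  simp only [hpu]
  split_ifs <;> nlinarith

theorem IsPUOutcome.unique {n m : ℕ} {V : Fin n → Fin m → ℝ} {w w' : Fin m → ℝ}
    (hw : IsPUOutcome V w) (hw' : IsPUOutcome V w') : w = w' := by
  obtain ⟨t, -, hsum, hw⟩ := hw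
  obtain ⟨t', -, hsum', hw'⟩ := hw'
  wlog htt' : t ≤ t' generalizing w w' t t'
  · exact (this t' hsum' hw' t hsum hw (le_of_not_ge htt')).symm
  have hle j : phantomMedian V (puPhantom n · t) j ≤ phantomMedian V (puPhantom n · t') j :=
    phantomMedian_mono V (fun k hk => puPhantom_monotone hk htt') j
  have heq := (sum_eq_sum_iff_of_le fun j _ => hle j).1 (hsum.trans hsum'.symm)
  funext j
  rw [hw j, hw' j]
  exact heq j (mem_univ j)

section PhantomTime

variable {n k : ℕ} {A : ℝ}

theorem puPhantom_of_two_mul_lt (hA : 0 < A) (hk : 2 * k < n) :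
    puPhantom n k (1 / 2 + n / (2 * A)) = k / A := by
  have hn : (0 : ℝ) < n := by exact_mod_cast (by omega : 0 < n)
  have hk' : (k : ℝ) / n < 1 / 2 := by
    rw [div_lt_iff₀ hn]; linarith [show (2 * k : ℝ) < n by exact_mod_cast hk]
  rw [puPhantom, if_neg (not_lt.2 (le_add_of_nonneg_right (by positivity))), if_pos hk']
  field_simp
  ring

theorem div_le_puPhantom (hn : 0 < n) (hnA : n ≤ A) :
    k / A ≤ puPhantom n k (1 / 2 + n / (2 * A)) := by
  have hn : (0 : ℝ) < n := by exact_mod_cast hn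
  have hA : 0 < A := hn.trans_le hnA
  rcases lt_or_ge (2 * k) n with hk | hk
  · exact (puPhantom_of_two_mul_lt hA hk).ge
  have hk : (n : ℝ) ≤ 2 * k := by exact_mod_cast hk
  have hk' : ¬ (k : ℝ) / n < 1 / 2 := by
    rw [div_lt_iff₀ hn]; linarith
  have heq : puPhantom n k (1 / 2 + n / (2 * A)) = k / A + (2 * k - n) * (1 / n - 1 / A) := by
    rw [puPhantom, if_neg (not_lt.2 (le_add_of_nonneg_right (by positivity))), if_neg hk']
    field_simp
    ring
  rw [heq, le_add_iff_nonneg_right]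
  exact mul_nonneg (by linarith) (sub_nonneg.2 (one_div_le_one_div_of_le hn hnA))

end PhantomTime

theorem Fin.card_filter_val_lt_of_le {m z : ℕ} (hz : z ≤ m) : #{j : Fin m | (j : ℕ) < z} = z := by
  simp [Fin.card_filter_val_lt, hz]

theorem Fin.card_filter_not_val_lt {m z : ℕ} (hz : z ≤ m) :
    #{j : Fin m | ¬ (j : ℕ) < z} = m - z := by
  have := card_filter_add_card_filter_not (s := (univ : Finset (Fin m))) (fun j => (j : ℕ) < z)
  rw [Fin.card_filter_val_lt_of_le hz, card_univ, Fintype.card_fin] at this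
  omega

theorem Fin.sum_ite_val_lt {M : Type*} [AddCommMonoid M] {m z : ℕ} (hz : z ≤ m) (a b : M) :
    ∑ j : Fin m, (if (j : ℕ) < z then a else b) = z • a + (m - z) • b := by
  rw [sum_ite, Finset.sum_const, Finset.sum_const, Fin.card_filter_val_lt_of_le hz,
    Fin.card_filter_not_val_lt hz]

section LowerBoundProfile

variable {m : ℕ}

theorem zLB_le (m : ℕ) : zLB m ≤ m :=
  Nat.floor_le_of_le (sub_le_self _ (by positivity))

theorem cast_sub_zLB (m : ℕ) : ((m - zLB m : ℕ) : ℝ) = m - zLB m :=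
  Nat.cast_sub (zLB_le m)

theorem one_le_sub_zLB (hm : 0 < m) : (1 : ℝ) ≤ m - zLB m := by
  have : zLB m < m := (Nat.floor_lt' hm.ne').2 (sub_lt_self _ (by positivity))
  have : (zLB m : ℝ) + 1 ≤ m := by exact_mod_cast this
  linarith

theorem sub_zLB_lt (m : ℕ) : (m : ℝ) - zLB m < (m : ℝ) ^ ((2 : ℝ) / 3) + 1 := by
  have := Nat.lt_floor_add_one ((m : ℝ) - (m : ℝ) ^ ((2 : ℝ) / 3))
  rw [← zLB] at this
  linarith

theorem rpow_le_sub_zLB (hm : 0 < m) : (m : ℝ) ^ ((2 : ℝ) / 3) ≤ m - zLB m := by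
  have hle : (m : ℝ) ^ ((2 : ℝ) / 3) ≤ m :=
    Real.rpow_le_self_of_one_le (by exact_mod_cast hm) (by norm_num)
  have := Nat.floor_le (sub_nonneg.2 hle)
  rw [← zLB] at this
  linarith

theorem cast_aLB (m : ℕ) : (aLB m : ℝ) = ((m : ℝ) - zLB m) ^ 2 := by
  rw [aLB, Nat.cast_pow, cast_sub_zLB]

theorem le_aLB_add_zLB (m : ℕ) : m ≤ aLB m + zLB m := by
  have := Nat.le_self_pow two_ne_zero (m - zLB m)
  have := zLB_le m
  rw [aLB]
  omega

theorem cast_le_aLB_add_zLB (m : ℕ) : (m : ℝ) ≤ aLB m + zLB m := by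
  exact_mod_cast le_aLB_add_zLB m

theorem aLB_add_zLB_pos (hm : 0 < m) : 0 < (aLB m + zLB m : ℝ) :=
  lt_of_lt_of_le (by exact_mod_cast hm) (cast_le_aLB_add_zLB m)

theorem one_div_le_xLB (hm : 0 < m) (j : Fin m) : 1 / (aLB m + zLB m : ℝ) ≤ xLB m j := by
  have := one_le_sub_zLB hm
  unfold xLB
  split_ifs
  · rfl
  · gcongr

theorem xLB_le (hm : 0 < m) (j : Fin m) : xLB m j ≤ ((m : ℝ) - zLB m) / (aLB m + zLB m) := by
  have := one_le_sub_zLB hm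
  unfold xLB
  split_ifs
  · gcongr
  · rfl

theorem lbProfile_le_xLB (hm : 0 < m) {i j : Fin m} (hij : i ≠ j) : lbProfile m i j ≤ xLB m j := by
  unfold lbProfile
  split_ifs with hi hji
  · exact absurd hji.symm hij
  · exact le_trans (by positivity) (one_div_le_xLB hm j)
  · rfl

theorem lt_zLB_of_lbProfile_lt {i j : Fin m} (h : lbProfile m i j < xLB m j) : (i : ℕ) < zLB m := by
  by_contra hi
  simp [lbProfile, hi] at h

noncomputable def lbTime (m : ℕ) : ℝ := 1 / 2 + m / (2 * (aLB m + zLB m : ℝ))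

theorem countP_projValues_lbProfile_lt (hm : 0 < m) (j : Fin m) :
    (projValues (lbProfile m) (puPhantom m · (lbTime m)) j).countP (· < xLB m j) ≤ m := by
  have hreports : #{i | lbProfile m i j < xLB m j} ≤ zLB m :=
    calc #{i | lbProfile m i j < xLB m j} ≤ #{i : Fin m | (i : ℕ) < zLB m} :=
          card_le_card fun i hi => by simpa using lt_zLB_of_lbProfile_lt (mem_filter.1 hi).2
      _ = zLB m := Fin.card_filter_val_lt_of_le (zLB_le m)
  have hphantoms : #{k ∈ range (m + 1) | puPhantom m k (lbTime m) < xLB m j} ≤ m - zLB m :=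
    calc #{k ∈ range (m + 1) | puPhantom m k (lbTime m) < xLB m j} ≤ #(range (m - zLB m)) := by
          refine card_le_card fun k hk => mem_range.2 ?_
          have hk := (div_le_puPhantom (k := k) hm (cast_le_aLB_add_zLB m)).trans_lt
            ((mem_filter.1 hk).2.trans_le (xLB_le hm j))
          rw [div_lt_div_iff_of_pos_right (aLB_add_zLB_pos hm), ← cast_sub_zLB] at hk
          exact_mod_cast hk
      _ = m - zLB m := card_range _
  rw [countP_projValues]
  have := zLB_le m
  omega

theorem countP_projValues_lbProfile_le (hm : 2 < m) (j : Fin m) :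
    m < (projValues (lbProfile m) (puPhantom m · (lbTime m)) j).countP (· ≤ xLB m j) := by
  have hA := aLB_add_zLB_pos (by omega : 0 < m)
  have hx := one_div_le_xLB (by omega) j
  have hreports : m - 1 ≤ #{i | lbProfile m i j ≤ xLB m j} :=
    calc m - 1 = #(univ.erase j) := by simp
      _ ≤ _ := card_le_card fun i hi =>
          mem_filter.2 ⟨mem_univ i, lbProfile_le_xLB (by omega) (ne_of_mem_erase hi)⟩
  have hphantoms : 2 ≤ #{k ∈ range (m + 1) | puPhantom m k (lbTime m) ≤ xLB m j} :=
    calc 2 = #({0, 1} : Finset ℕ) := rfl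
      _ ≤ _ := by
        refine card_le_card fun k hk => ?_
        have hk : k ≤ 1 := by simp at hk; omega
        rw [mem_filter, mem_range, lbTime, puPhantom_of_two_mul_lt hA (by omega)]
        exact ⟨by omega, hx.trans' (div_le_div_of_nonneg_right (by exact_mod_cast hk) hA.le)⟩
  rw [countP_projValues]
  omega

theorem phantomMedian_lbProfile (hm : 2 < m) (j : Fin m) :
    phantomMedian (lbProfile m) (puPhantom m · (lbTime m)) j = xLB m j :=
  medianAt_eq_of_countP (by rw [card_projValues]; omega)
    (countP_projValues_lbProfile_lt (by omega) j) (countP_projValues_lbProfile_le hm j)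

theorem sum_xLB (hm : 0 < m) : ∑ j, xLB m j = 1 := by
  have hA := (aLB_add_zLB_pos hm).ne'
  unfold xLB
  rw [Fin.sum_ite_val_lt (zLB_le m), nsmul_eq_mul, nsmul_eq_mul, cast_sub_zLB]
  field_simp
  rw [cast_aLB]
  ring

theorem lbTime_mem_Icc (hm : 0 < m) : lbTime m ∈ Set.Icc 0 1 := by
  have hA := aLB_add_zLB_pos hm
  have : (m : ℝ) / (2 * (aLB m + zLB m : ℝ)) ≤ 1 / 2 := by
    rw [div_le_iff₀ (by positivity)]; linarith [cast_le_aLB_add_zLB m]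
  exact ⟨by unfold lbTime; positivity, by unfold lbTime; linarith⟩

theorem isPUOutcome_lbProfile (hm : 2 < m) : IsPUOutcome (lbProfile m) (xLB m) :=
  ⟨lbTime m, lbTime_mem_Icc (by omega),
    by simp_rw [phantomMedian_lbProfile hm]; exact sum_xLB (by omega),
    fun j => (phantomMedian_lbProfile hm j).symm⟩

theorem sum_lbProfile (j : Fin m) :
    ∑ i, lbProfile m i j = (if (j : ℕ) < zLB m then 1 else 0) + (m - zLB m) * xLB m j := by
  simp only [lbProfile]
  rw [sum_ite, sum_ite_eq, Finset.sum_const, Fin.card_filter_not_val_lt (zLB_le m), nsmul_eq_mul,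
    cast_sub_zLB]
  simp

theorem abs_xLB_sub_propDiv (hm : 0 < m) (j : Fin m) :
    |xLB m j - propDiv (lbProfile m) j| =
      if (j : ℕ) < zLB m then (aLB m : ℝ) / ((aLB m + zLB m) * m)
      else ((m : ℝ) - zLB m) * zLB m / ((aLB m + zLB m) * m) := by
  have hA := aLB_add_zLB_pos hm
  have hz : (zLB m : ℝ) ≤ m := by exact_mod_cast zLB_le m
  rw [propDiv, sum_lbProfile]
  unfold xLB
  split_ifs
  · have heq : 1 / (aLB m + zLB m : ℝ) - (1 + (m - zLB m) * (1 / (aLB m + zLB m))) / m =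
        -(aLB m / ((aLB m + zLB m) * m)) := by
      field_simp
      rw [cast_aLB]
      ring
    rw [heq, abs_neg, abs_of_nonneg (by positivity)]
  · have heq : ((m : ℝ) - zLB m) / (aLB m + zLB m) -
        (0 + (m - zLB m) * ((m - zLB m) / (aLB m + zLB m))) / m =
        (m - zLB m) * zLB m / ((aLB m + zLB m) * m) := by
      field_simp
      rw [cast_aLB]
      ring
    rw [heq, abs_of_nonneg (div_nonneg (mul_nonneg (sub_nonneg.2 hz) (Nat.cast_nonneg _))
      (by positivity))]

theorem l1_xLB_propDiv (hm : 0 < m) :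
    l1 (xLB m) (propDiv (lbProfile m)) =
      2 * ((aLB m : ℝ) / ((aLB m : ℝ) + (zLB m : ℝ))) * ((zLB m : ℝ) / (m : ℝ)) := by
  have hA := aLB_add_zLB_pos hm
  rw [l1, sum_congr rfl fun j _ => abs_xLB_sub_propDiv hm j, Fin.sum_ite_val_lt (zLB_le m),
    nsmul_eq_mul, nsmul_eq_mul, cast_sub_zLB]
  field_simp
  rw [cast_aLB]
  ring

end LowerBoundProfile

theorem two_sub_eight_div_le {r D : ℝ} (hr : 2 ≤ r) (hD : r ^ 2 ≤ D) (hD' : D ≤ r ^ 2 + 1) :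
    2 - 8 / r ≤ 2 * (D ^ 2 / (D ^ 2 + (r ^ 3 - D))) * ((r ^ 3 - D) / r ^ 3) := by
  have hr0 : 0 < r := by linarith
  have hDr : D ≤ r ^ 3 := by nlinarith
  have hA : 0 < D ^ 2 + (r ^ 3 - D) := by nlinarith
  have h₁ : r * r ^ 3 ≤ D ^ 2 := by nlinarith
  have h₂ : r * D ≤ 2 * r ^ 3 := by nlinarith
  have hkey : r * (D ^ 3 + (r ^ 3 - D) * r ^ 3) ≤ 4 * ((D ^ 2 + (r ^ 3 - D)) * r ^ 3) := by
    nlinarith [mul_le_mul_of_nonneg_right h₂ (sq_nonneg D),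
      mul_le_mul_of_nonneg_left h₁ (sub_nonneg.2 hDr)]
  have hid : 2 * (D ^ 2 / (D ^ 2 + (r ^ 3 - D))) * ((r ^ 3 - D) / r ^ 3) =
      2 - 2 * (D ^ 3 + (r ^ 3 - D) * r ^ 3) / ((D ^ 2 + (r ^ 3 - D)) * r ^ 3) := by
    field_simp
    ring
  rw [hid, sub_le_sub_iff_left, div_le_div_iff₀ (by positivity) hr0]
  linarith

theorem two_sub_eight_div_le_loss {m : ℕ} (hm : 8 ≤ m) :
    2 - 8 / (m : ℝ) ^ ((1 : ℝ) / 3) ≤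
      2 * ((aLB m : ℝ) / ((aLB m : ℝ) + (zLB m : ℝ))) * ((zLB m : ℝ) / (m : ℝ)) := by
  set r := (m : ℝ) ^ ((1 : ℝ) / 3) with hr_def
  have hrm : r ^ 3 = m := by rw [hr_def, ← Real.rpow_mul_natCast (Nat.cast_nonneg _)]; norm_num
  have hc : (m : ℝ) ^ ((2 : ℝ) / 3) = r ^ 2 := by
    rw [hr_def, ← Real.rpow_mul_natCast (Nat.cast_nonneg _)]; norm_num
  have hr : 2 ≤ r := le_of_pow_le_pow_left₀ three_ne_zero (by positivity)
    (by rw [hrm]; norm_num; exact_mod_cast hm)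
  have hD := rpow_le_sub_zLB (by omega : 0 < m)
  have hD' := sub_zLB_lt m
  rw [hc] at hD hD'
  have := two_sub_eight_div_le hr hD hD'.le
  rwa [hrm, sub_sub_cancel, ← cast_aLB] at this

/-- For every `m ≥ 8`, on the profile `lbProfile m` the Piecewise
Uniform mechanism outputs `xLB m`, and the resulting ℓ1-loss equals
`2·(a/(a+z))·(z/m) ≥ 2 - 8/m^(1/3)`. -/
theorem piecewise_uniform_many_projects (m : ℕ) (hm : 8 ≤ m) :
    IsPUOutcome (lbProfile m) (xLB m) ∧
    (∀ w : Fin m → ℝ, IsPUOutcome (lbProfile m) w → w = xLB m) ∧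
    l1 (xLB m) (propDiv (lbProfile m)) =
      2 * ((aLB m : ℝ) / ((aLB m : ℝ) + (zLB m : ℝ))) * ((zLB m : ℝ) / (m : ℝ)) ∧
    2 - 8 / (m : ℝ) ^ ((1 : ℝ) / 3) ≤
      2 * ((aLB m : ℝ) / ((aLB m : ℝ) + (zLB m : ℝ))) * ((zLB m : ℝ) / (m : ℝ)) :=
  ⟨isPUOutcome_lbProfile (by omega), fun _ hw => hw.unique (isPUOutcome_lbProfile (by omega)),
    l1_xLB_propDiv (by omega), two_sub_eight_div_le_loss hm⟩
end
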